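/- arXiv:1608.07787 — 7 statements merged into one kernel-verified Lean document; each statement's English description precedes it below -/
import Mathlib

section
/- Let S, V be complex 2n×2n matrices with S* J S = J, (V* J S)* = V* J S, (V J S*)* = V J S*, and V* J V = 0 = V J V*. Then Ψ := J S J V* J satisfies Ψ* = Ψ and Ψ J Ψ = 0, and moreover V = -J Ψ S. -/
open Matrix

/-- Lemma 2.1(iii), second part. -/
theorem stmt3 (n : ℕ)
    (J : Matrix (Fin n ⊕ Fin n) (Fin n ⊕ Fin n) ℂ)
    (hJ : J = Matrix.fromBlocks 0 1 (-1) 0)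
    (S V : Matrix (Fin n ⊕ Fin n) (Fin n ⊕ Fin n) ℂ)
    (hS : Sᴴ * J * S = J)
    (h1 : (Vᴴ * J * S)ᴴ = Vᴴ * J * S)
    (h2 : (V * J * Sᴴ)ᴴ = V * J * Sᴴ)
    (h3 : Vᴴ * J * V = 0)
    (h4 : V * J * Vᴴ = 0) :
    (J * S * J * Vᴴ * J)ᴴ = J * S * J * Vᴴ * J ∧
      (J * S * J * Vᴴ * J) * J * (J * S * J * Vᴴ * J) = 0 ∧
      V = -(J * (J * S * J * Vᴴ * J) * S) := by
  have hJH : Jᴴ = -J := by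
    rw [hJ]
    simp [Matrix.fromBlocks_conjTranspose, Matrix.fromBlocks_neg]
  have hJ2 : J * J = -1 := by
    rw [hJ, Matrix.fromBlocks_multiply, ← Matrix.fromBlocks_one, Matrix.fromBlocks_neg]
    simp
  have hJ2' : ∀ X : Matrix (Fin n ⊕ Fin n) (Fin n ⊕ Fin n) ℂ, J * (J * X) = -X := by
    intro X
    rw [← Matrix.mul_assoc, hJ2, Matrix.neg_mul, Matrix.one_mul]
  -- S is invertible with inverse -(J * Sᴴ * J)
  have hSl : -(J * Sᴴ * J) * S = 1 := by
    have := congrArg (fun X => J * X) hS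
    simp only [← Matrix.mul_assoc] at this
    rw [Matrix.neg_mul, this, hJ2, neg_neg]
  have hSr : S * -(J * Sᴴ * J) = 1 := mul_eq_one_comm.mp hSl
  have hSJS : S * J * Sᴴ = J := by
    have := congrArg (fun X => X * J) hSr
    simp only [Matrix.neg_mul, Matrix.mul_neg, Matrix.one_mul, Matrix.mul_assoc, hJ2] at this
    simp only [← Matrix.mul_assoc] at this
    simpa using this
  have hSJS' : ∀ Z : Matrix (Fin n ⊕ Fin n) (Fin n ⊕ Fin n) ℂ,
      S * (J * (Sᴴ * Z)) = J * Z := by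
    intro Z
    have := congrArg (fun X => X * Z) hSJS
    simpa only [Matrix.mul_assoc] using this
  have h1' : Vᴴ * (J * S) = -(Sᴴ * (J * V)) := by
    have := h1
    simp only [conjTranspose_mul, conjTranspose_conjTranspose, hJH, Matrix.mul_assoc,
      Matrix.neg_mul, Matrix.mul_neg] at this
    exact this.symm
  have h1'' : ∀ Y : Matrix (Fin n ⊕ Fin n) (Fin n ⊕ Fin n) ℂ,
      Vᴴ * (J * (S * Y)) = -(Sᴴ * (J * (V * Y))) := by
    intro Y
    have := congrArg (fun X => X * Y) h1'
    simpa only [Matrix.mul_assoc, Matrix.neg_mul] using this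
  have h2' : V * (J * Sᴴ) = -(S * (J * Vᴴ)) := by
    have := h2
    simp only [conjTranspose_mul, conjTranspose_conjTranspose, hJH, Matrix.mul_assoc,
      Matrix.neg_mul, Matrix.mul_neg] at this
    exact this.symm
  have h2'' : V * (J * (Sᴴ * J)) = -(S * (J * (Vᴴ * J))) := by
    have := congrArg (fun X => X * J) h2'
    simpa only [Matrix.mul_assoc, Matrix.neg_mul] using this
  have h4' : V * (J * (Vᴴ * J)) = 0 := by
    have := congrArg (fun X => X * J) h4
    simpa only [Matrix.mul_assoc, Matrix.zero_mul] using this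
  refine ⟨?_, ?_, ?_⟩
  · simp only [conjTranspose_mul, conjTranspose_conjTranspose, hJH, Matrix.mul_assoc,
      Matrix.neg_mul, Matrix.mul_neg, neg_neg]
    rw [h2'']
    simp
  · simp only [Matrix.mul_assoc]
    rw [hJ2', Matrix.mul_neg, Matrix.mul_neg, Matrix.mul_neg, Matrix.mul_neg,
      h1'', h4']
    simp
  · simp only [Matrix.mul_assoc]
    rw [hJ2', h1']
    simp only [Matrix.mul_neg, neg_neg, hSJS', hJ2', neg_neg]
end

section
/- Let S, V be complex 2n×2n matrices and define 𝕊(λ) := S + λV for λ ∈ ℂ. Then 𝕊(λ̄)* J 𝕊(λ) = J holds for all λ ∈ ℂ if and only if S* J S = J and V satisfies (V* J S)* = V* J S, (V J S*)* = V J S*, and V* J V = 0 = V J V*. -/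
open Matrix

section Helpers
variable {m : Type*} [Fintype m] [DecidableEq m]

lemma poly_coeffs (A B C D : Matrix m m ℂ)
    (h : ∀ l : ℂ, A + l • B + l ^ 2 • C = D) : A = D ∧ B = 0 ∧ C = 0 := by
  have h0 := h 0
  simp at h0
  have h1 := h 1
  have h2 := h (-1)
  simp [h0, one_smul] at h1 h2
  have e1 : B + C = 0 := by
    have : D + (B + C) = D + 0 := by rw [add_zero, ← add_assoc]; exact h1
    exact add_left_cancel this
  have e2 : -B + C = 0 := by
    have : D + (-B + C) = D + 0 := by rw [add_zero, ← add_assoc]; exact h2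
    exact add_left_cancel this
  have hBC : B = C := by rwa [neg_add_eq_zero] at e2
  have hC : C = 0 := by
    have h2C : (2 : ℂ) • C = 0 := by rw [two_smul]; rw [hBC] at e1; exact e1
    rcases smul_eq_zero.mp h2C with h | h
    · norm_num at h
    · exact h
  exact ⟨h0, by rw [hBC, hC], hC⟩

lemma dual_symp (J A B : Matrix m m ℂ) (hJJ : J * J = -1)
    (h : A * J * B = J) : B * J * A = J := by
  have h1 : (-(J * A * J)) * B = 1 := by
    calc -(J * A * J) * B = -(J * (A * J * B)) := by noncomm_ring
    _ = -(J*J) := by rw [h]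
    _ = 1 := by rw [hJJ]; simp
  have h2 : B * (-(J * A * J)) = 1 := by
    rw [mul_eq_one_comm] at h1; exact h1
  have h3 : B * J * A * J = -1 := by
    have hn : -(B * J * A * J) = 1 := by rw [← h2]; noncomm_ring
    exact neg_eq_iff_eq_neg.mp hn
  have h4 := congrArg (fun X => X * J) h3
  simp only [neg_mul, one_mul] at h4
  calc B * J * A = -(B * J * A * (J * J)) := by rw [hJJ]; noncomm_ring
  _ = -(B * J * A * J * J) := by noncomm_ring
  _ = -(-J) := by rw [h4]
  _ = J := neg_neg J

lemma expand_prod (X Y Z W J : Matrix m m ℂ) (l : ℂ) :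
    (X + l • Y) * J * (Z + l • W) =
      X * J * Z + l • (Y * J * Z + X * J * W) + l ^ 2 • (Y * J * W) := by
  simp only [add_mul, mul_add, smul_mul_assoc, mul_smul_comm, smul_add, smul_smul, pow_two]
  abel

end Helpers

/-- Lemma 2.2, first part: `𝕊(λ̄)ᴴ J 𝕊(λ) = J` for all `λ` iff `SᴴJS = J` and `V`
satisfies the structural identities (2.3). -/
theorem stmt4 (n : ℕ)
    (J : Matrix (Fin n ⊕ Fin n) (Fin n ⊕ Fin n) ℂ)
    (hJ : J = Matrix.fromBlocks 0 1 (-1) 0)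
    (S V : Matrix (Fin n ⊕ Fin n) (Fin n ⊕ Fin n) ℂ) :
    (∀ l : ℂ, (S + (starRingEnd ℂ l) • V)ᴴ * J * (S + l • V) = J) ↔
      (Sᴴ * J * S = J ∧ (Vᴴ * J * S)ᴴ = Vᴴ * J * S ∧ (V * J * Sᴴ)ᴴ = V * J * Sᴴ ∧
        Vᴴ * J * V = 0 ∧ V * J * Vᴴ = 0) := by
  have hJJ : J * J = -1 := by
    subst hJ
    rw [Matrix.fromBlocks_multiply]
    simp
    ext (i|i) (j|j) <;> simp [Matrix.one_apply]
  have hJH : Jᴴ = -J := by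
    subst hJ
    rw [Matrix.fromBlocks_conjTranspose]
    simp
    ext (i|i) (j|j) <;> simp
  have hCT : ∀ l : ℂ, (S + (starRingEnd ℂ l) • V)ᴴ = Sᴴ + l • Vᴴ := by
    intro l
    rw [conjTranspose_add, conjTranspose_smul]
    simp
  constructor
  · intro h
    have hfor : ∀ l : ℂ, Sᴴ * J * S + l • (Vᴴ * J * S + Sᴴ * J * V)
        + l ^ 2 • (Vᴴ * J * V) = J := by
      intro l
      have hl := h l
      rw [hCT l, expand_prod] at hl
      exact hl
    obtain ⟨h0, hA, hB⟩ := poly_coeffs _ _ _ _ hfor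
    have hdual : ∀ l : ℂ, S * J * Sᴴ + l • (V * J * Sᴴ + S * J * Vᴴ)
        + l ^ 2 • (V * J * Vᴴ) = J := by
      intro l
      have hl := dual_symp J _ _ hJJ (h l)
      rw [hCT l, expand_prod] at hl
      exact hl
    obtain ⟨h0', hA', hB'⟩ := poly_coeffs _ _ _ _ hdual
    have hVS : Vᴴ * J * S = -(Sᴴ * J * V) := eq_neg_of_add_eq_zero_left hA
    have hVS' : V * J * Sᴴ = -(S * J * Vᴴ) := eq_neg_of_add_eq_zero_left hA'
    refine ⟨h0, ?_, ?_, hB, hB'⟩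
    · calc (Vᴴ * J * S)ᴴ = Sᴴ * Jᴴ * V := by
            rw [conjTranspose_mul, conjTranspose_mul]
            simp [mul_assoc]
      _ = -(Sᴴ * J * V) := by rw [hJH]; noncomm_ring
      _ = Vᴴ * J * S := hVS.symm
    · calc (V * J * Sᴴ)ᴴ = S * Jᴴ * Vᴴ := by
            rw [conjTranspose_mul, conjTranspose_mul]
            simp [mul_assoc]
      _ = -(S * J * Vᴴ) := by rw [hJH]; noncomm_ring
      _ = V * J * Sᴴ := hVS'.symm
  · rintro ⟨h0, hH, -, hB, -⟩
    intro l
    rw [hCT l, expand_prod, h0, hB]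
    have hAz : Vᴴ * J * S + Sᴴ * J * V = 0 := by
      have : Vᴴ * J * S = -(Sᴴ * J * V) := by
        calc Vᴴ * J * S = (Vᴴ * J * S)ᴴ := hH.symm
        _ = Sᴴ * Jᴴ * V := by
            rw [conjTranspose_mul, conjTranspose_mul]
            simp [mul_assoc]
        _ = -(Sᴴ * J * V) := by rw [hJH]; noncomm_ring
      rw [this]; simp
    rw [hAz]
    simp
end

section
/- Let 𝕊(λ) = S + λV with S* J S = J and V = -J Ψ S where Ψ* = Ψ and Ψ J Ψ = 0. Then for every λ ∈ ℂ, 𝕊(λ) is invertible with 𝕊(λ)⁻¹ = -J 𝕊(λ̄)* J. -/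
open Matrix

/-- Identity (1A): `𝕊(λ)` is invertible with `𝕊(λ)⁻¹ = -J 𝕊(λ̄)ᴴ J`. -/
theorem stmt6 (n : ℕ)
    (J : Matrix (Fin n ⊕ Fin n) (Fin n ⊕ Fin n) ℂ)
    (hJ : J = Matrix.fromBlocks 0 1 (-1) 0)
    (S Ψ V : Matrix (Fin n ⊕ Fin n) (Fin n ⊕ Fin n) ℂ)
    (hS : Sᴴ * J * S = J)
    (hΨherm : Ψᴴ = Ψ)
    (hΨJ : Ψ * J * Ψ = 0)
    (hV : V = -(J * Ψ * S)) :
    ∀ l : ℂ, IsUnit (S + l • V).det ∧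
      (S + l • V)⁻¹ = -(J * (S + (starRingEnd ℂ l) • V)ᴴ * J) := by
  have hJH : Jᴴ = -J := by
    subst hJ
    ext i j
    rcases i with i | i <;> rcases j with j | j <;>
      simp [conjTranspose_apply, fromBlocks, one_apply, eq_comm]
  have hJ2 : J * J = -1 := by
    subst hJ
    rw [Matrix.fromBlocks_multiply]
    ext i j
    rcases i with i | i <;> rcases j with j | j <;>
      simp [fromBlocks, one_apply]
  intro l
  have h1 : Sᴴ * (J * S) = J := by rw [← mul_assoc, hS]
  have hJ2' : ∀ X : Matrix (Fin n ⊕ Fin n) (Fin n ⊕ Fin n) ℂ, J * (J * X) = -X := by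
    intro X; rw [← mul_assoc, hJ2, neg_one_mul]
  have h2' : ∀ X : Matrix (Fin n ⊕ Fin n) (Fin n ⊕ Fin n) ℂ,
      Ψ * (J * (Ψ * X)) = 0 := by
    intro X; rw [← mul_assoc, ← mul_assoc, hΨJ, zero_mul]
  have key : (-(J * (S + (starRingEnd ℂ l) • V)ᴴ * J)) * (S + l • V) = 1 := by
    subst hV
    simp only [conjTranspose_add, conjTranspose_smul, conjTranspose_neg,
      conjTranspose_mul, hΨherm, hJH, starRingEnd_self_apply]
    simp only [mul_add, add_mul, neg_mul, mul_neg, neg_neg, smul_mul_assoc,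
      mul_smul_comm, mul_assoc, smul_smul, neg_add_rev, smul_neg, neg_smul]
    simp only [starRingEnd_apply, star_star, hJ2', h2', h1, hJ2, mul_zero, smul_zero, neg_zero,
      mul_neg, neg_neg, smul_neg, neg_smul, zero_add, neg_one_smul]
    abel
  refine ⟨Matrix.isUnit_det_of_left_inverse key, Matrix.inv_eq_left_inv key⟩
end

section
/- Let Ψ_k ≥ 0 with Ψ_k* = Ψ_k and Ψ_k J Ψ_k = 0, S_k* J S_k = J, V_k = -J Ψ_k S_k, and 𝕊_k(λ) = S_k + λV_k for k ∈ ℕ₀. If z satisfies z_k = 𝕊_k(λ) z_{k+1} - J Ψ_k f_k and u satisfies u_k = 𝕊_k(ν) u_{k+1} - J Ψ_k g_k for all k, then Δ[z_k* J u_k] = (λ̄ - ν) z_k* Ψ_k u_k + f_k* Ψ_k u_k - z_k* Ψ_k g_k for all k ∈ ℕ₀ (extended Lagrange identity). -/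
open Matrix
open scoped ComplexOrder

/-- Theorem 2.5 (extended Lagrange identity). -/
theorem stmt8 (n : ℕ)
    (J : Matrix (Fin n ⊕ Fin n) (Fin n ⊕ Fin n) ℂ)
    (hJ : J = Matrix.fromBlocks 0 1 (-1) 0)
    (S Ψ V : ℕ → Matrix (Fin n ⊕ Fin n) (Fin n ⊕ Fin n) ℂ)
    (hS : ∀ k : ℕ, (S k)ᴴ * J * S k = J)
    (hΨpsd : ∀ k : ℕ, (Ψ k).PosSemidef)
    (hΨJ : ∀ k : ℕ, Ψ k * J * Ψ k = 0)
    (hV : ∀ k : ℕ, V k = -(J * Ψ k * S k))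
    (lam ν : ℂ)
    (z u f g : ℕ → (Fin n ⊕ Fin n) → ℂ)
    (hz : ∀ k : ℕ, z k = (S k + lam • V k) *ᵥ z (k + 1) - (J * Ψ k) *ᵥ f k)
    (hu : ∀ k : ℕ, u k = (S k + ν • V k) *ᵥ u (k + 1) - (J * Ψ k) *ᵥ g k) :
    ∀ k : ℕ,
      star (z (k + 1)) ⬝ᵥ (J *ᵥ u (k + 1)) - star (z k) ⬝ᵥ (J *ᵥ u k) =
        (starRingEnd ℂ lam - ν) * (star (z k) ⬝ᵥ (Ψ k *ᵥ u k)) +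
          star (f k) ⬝ᵥ (Ψ k *ᵥ u k) - star (z k) ⬝ᵥ (Ψ k *ᵥ g k) := by
  have hJH : Jᴴ = -J := by
    subst hJ; simp [Matrix.fromBlocks_conjTranspose, Matrix.fromBlocks_neg]
  have hJ2 : J * J = -1 := by
    subst hJ; simp [Matrix.fromBlocks_multiply, ← Matrix.fromBlocks_one, Matrix.fromBlocks_neg]
  have hJJ : ∀ X : Matrix (Fin n ⊕ Fin n) (Fin n ⊕ Fin n) ℂ, J * (J * X) = -X := by
    intro X; rw [← mul_assoc, hJ2, neg_one_mul]
  intro k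
  have hΨH : (Ψ k)ᴴ = Ψ k := (hΨpsd k).isHermitian
  have hSJS : ∀ X, (S k)ᴴ * (J * (S k * X)) = J * X := by
    intro X
    calc (S k)ᴴ * (J * (S k * X)) = ((S k)ᴴ * J * S k) * X := by noncomm_ring
    _ = J * X := by rw [hS k]
  have hΨJΨ : ∀ X, Ψ k * (J * (Ψ k * X)) = 0 := by
    intro X
    calc Ψ k * (J * (Ψ k * X)) = (Ψ k * J * Ψ k) * X := by noncomm_ring
    _ = 0 := by rw [hΨJ k, zero_mul]
  have hΨJΨ0 : Ψ k * (J * Ψ k) = 0 := by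
    have := hΨJ k; rwa [mul_assoc] at this
  have hSJS0 : (S k)ᴴ * (J * S k) = J := by
    have := hS k; rwa [mul_assoc] at this
  rw [hz k, hu k, hV k]
  simp only [Matrix.mulVec_sub, Matrix.mulVec_mulVec, star_sub, Matrix.star_mulVec,
    sub_dotProduct, dotProduct_sub, Matrix.dotProduct_mulVec,
    Matrix.vecMul_vecMul, conjTranspose_add, conjTranspose_smul, conjTranspose_neg,
    conjTranspose_mul, hΨH, hJH, mul_neg, neg_mul, neg_neg, smul_neg,
    mul_add, add_mul, Matrix.mul_smul, Matrix.smul_mul, smul_smul, mul_assoc,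
    hJJ, hJ2, hSJS, hΨJΨ, hΨJΨ0, hSJS0, star_smul, star_add, star_neg, one_mul, mul_one, sub_zero, zero_sub, mul_zero, zero_mul, smul_zero, add_zero, zero_add, neg_zero,
    Matrix.smul_mulVec, Matrix.add_vecMul, Matrix.vecMul_add, Matrix.smul_vecMul,
    Matrix.vecMul_zero, Matrix.zero_vecMul, Matrix.sub_vecMul, Matrix.vecMul_sub, Matrix.mulVec_smul, Matrix.add_mulVec,
    Matrix.zero_mulVec, Matrix.mulVec_zero, Matrix.neg_mulVec, Matrix.vecMul_neg,
    Matrix.neg_vecMul, dotProduct_neg, neg_dotProduct,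
    dotProduct_add, add_dotProduct, dotProduct_smul,
    smul_dotProduct, dotProduct_zero, zero_dotProduct,
    smul_eq_mul, RCLike.star_def]
  ring
end

section
/- Fix λ₀ ∈ ℂ. The discrete symplectic system z_k = 𝕊_k(λ) z_{k+1} is definite on a discrete interval I ⊆ ℕ₀ (i.e., for every λ ∈ ℂ, every nontrivial solution z(λ) satisfies Σ_{k∈I} z_k(λ)* Ψ_k z_k(λ) > 0) if and only if every solution z(λ₀) of the system at λ₀ with Σ_{k∈I} z_k(λ₀)* Ψ_k z_k(λ₀) = 0 vanishes identically on I. -/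
/-!
Since `Ψ_k J Ψ_k = 0`, the matrix `J Ψ_k` is nilpotent, so `𝕊_k(λ) = (1 - λ J Ψ_k) S_k` is
invertible and a solution is determined by its value at any single index. If a solution `z(λ)`
has vanishing `Ψ`-sum over `I`, then `Ψ_k z_k = 0` on `I`, and at such indices the recurrence
does not depend on `λ`. Hence `z(λ)` agrees on `I` with the solution at `λ₀` having the same
value at one point of `I`; that solution has vanishing `Ψ`-sum as well, so by hypothesis it
vanishes on `I`, and then `z(λ)` vanishes at a point, hence everywhere.
-/

open Matrix Function Set
open scoped ComplexOrder

section BackwardRecurrence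

variable {E : Type*}

def solutionFlow (e : ℕ → E ≃ E) : ℕ → E ≃ E
  | 0 => Equiv.refl E
  | k + 1 => (solutionFlow e k).trans (e k).symm

lemma solutionFlow_eq_apply_succ (e : ℕ → E ≃ E) (k : ℕ) (v : E) :
    solutionFlow e k v = e k (solutionFlow e (k + 1) v) :=
  ((e k).apply_symm_apply _).symm

lemma exists_recurrence_solution_eq {A : ℕ → E → E} (hA : ∀ k, Bijective (A k))
    (k₀ : ℕ) (v : E) : ∃ z : ℕ → E, (∀ k, z k = A k (z (k + 1))) ∧ z k₀ = v := by
  set e := solutionFlow fun k => Equiv.ofBijective (A k) (hA k)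
  exact ⟨fun k => e k ((e k₀).symm v), fun k => solutionFlow_eq_apply_succ _ k _,
    (e k₀).apply_symm_apply v⟩

variable {A : ℕ → E → E} {I : Set ℕ} {z w : ℕ → E}

lemma eq_iff_eq_of_recurrence (hA : ∀ k, Injective (A k)) (hI : I.OrdConnected)
    (hz : ∀ k ∈ I, k + 1 ∈ I → z k = A k (z (k + 1)))
    (hw : ∀ k ∈ I, k + 1 ∈ I → w k = A k (w (k + 1)))
    {i j : ℕ} (hi : i ∈ I) (hj : j ∈ I) (hij : i ≤ j) : z i = w i ↔ z j = w j := by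
  induction j, hij using Nat.le_induction with
  | base => rfl
  | succ j hij ih =>
    have hjI : j ∈ I := hI.out hi hj ⟨hij, j.le_succ⟩
    rw [ih hjI, hz j hjI hj, hw j hjI hj, (hA j).eq_iff]

lemma eqOn_of_recurrence (hA : ∀ k, Injective (A k)) (hI : I.OrdConnected)
    (hz : ∀ k ∈ I, k + 1 ∈ I → z k = A k (z (k + 1)))
    (hw : ∀ k ∈ I, k + 1 ∈ I → w k = A k (w (k + 1)))
    {k₀ : ℕ} (hk₀ : k₀ ∈ I) (h : z k₀ = w k₀) : EqOn z w I := by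
  intro k hk
  rcases le_total k k₀ with hle | hle
  · exact (eq_iff_eq_of_recurrence hA hI hz hw hk hk₀ hle).2 h
  · exact (eq_iff_eq_of_recurrence hA hI hz hw hk₀ hk hle).1 h

lemma eq_of_recurrence (hA : ∀ k, Injective (A k)) (hz : ∀ k, z k = A k (z (k + 1)))
    (hw : ∀ k, w k = A k (w (k + 1))) (k₀ : ℕ) (h : z k₀ = w k₀) : z = w :=
  funext fun k => eqOn_of_recurrence hA ordConnected_univ (fun k _ _ => hz k)
    (fun k _ _ => hw k) (mem_univ k₀) h (mem_univ k)

end BackwardRecurrence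

namespace Matrix

variable {m R : Type*} [Fintype m] [DecidableEq m] [CommRing R]

lemma fromBlocks_zero_one_neg_one_zero_mul_self :
    (fromBlocks 0 1 (-1) 0 : Matrix (m ⊕ m) (m ⊕ m) R) * fromBlocks 0 1 (-1) 0 = -1 := by
  simp [fromBlocks_multiply, ← fromBlocks_one, fromBlocks_neg]

lemma isUnit_of_conjTranspose_mul_mul_self_eq [StarRing R] {J S : Matrix m m R} (hJ : IsUnit J)
    (hS : Sᴴ * J * S = J) : IsUnit S :=
  isUnit_of_mul_isUnit_right (x := Sᴴ * J) (by rwa [hS])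

variable {J Ψ S : Matrix m m R}

lemma isUnit_sub_smul_mul_mul (hS : IsUnit S) (hΨ : Ψ * J * Ψ = 0) (l : R) :
    IsUnit (S - l • (J * Ψ * S)) := by
  have hsq : (l • (J * Ψ)) ^ 2 = 0 := by
    rw [smul_pow, sq (J * Ψ), mul_assoc, ← mul_assoc Ψ, hΨ, mul_zero, smul_zero]
  have hfac : S - l • (J * Ψ * S) = (1 - l • (J * Ψ)) * S := by
    rw [sub_mul, one_mul, smul_mul_assoc]
  rw [hfac]
  exact (IsNilpotent.isUnit_one_sub ⟨2, hsq⟩).mul hS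

lemma sub_smul_mulVec_eq_of_mulVec_eq_zero (hΨ : Ψ * J * Ψ = 0) {l : R} {v : m → R}
    (h : Ψ *ᵥ ((S - l • (J * Ψ * S)) *ᵥ v) = 0) (μ : R) :
    (S - μ • (J * Ψ * S)) *ᵥ v = (S - l • (J * Ψ * S)) *ᵥ v := by
  have hΨSv : Ψ *ᵥ (S *ᵥ v) = 0 := by
    have hΨJΨS : Ψ * (J * Ψ * S) = 0 := by rw [← mul_assoc, ← mul_assoc, hΨ, zero_mul]
    rw [← h, sub_mulVec, mulVec_sub, smul_mulVec, mulVec_smul, mulVec_mulVec v Ψ (J * Ψ * S),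
      hΨJΨS, zero_mulVec, smul_zero, sub_zero]
  have hJΨSv (c : R) : (S - c • (J * Ψ * S)) *ᵥ v = S *ᵥ v := by
    rw [sub_mulVec, smul_mulVec, ← mulVec_mulVec, ← mulVec_mulVec, hΨSv, mulVec_zero,
      smul_zero, sub_zero]
  rw [hJΨSv, hJΨSv]

end Matrix

lemma Matrix.PosSemidef.ofReal_re_dotProduct_mulVec_eq_zero_iff {m : Type*} [Fintype m]
    {Ψ : Matrix m m ℂ} (hΨ : Ψ.PosSemidef) (v : m → ℂ) :
    ENNReal.ofReal (star v ⬝ᵥ Ψ *ᵥ v).re = 0 ↔ Ψ *ᵥ v = 0 := by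
  obtain ⟨hre, him⟩ := Complex.nonneg_iff.1 (hΨ.dotProduct_mulVec_nonneg v)
  rw [ENNReal.ofReal_eq_zero, ← hΨ.dotProduct_mulVec_zero_iff, Complex.ext_iff]
  exact ⟨fun h => ⟨le_antisymm h hre, him.symm⟩, fun h => h.1.le⟩

lemma tsum_ofReal_re_dotProduct_mulVec_eq_zero_iff {m : Type*} [Fintype m]
    {Ψ : ℕ → Matrix m m ℂ} (hΨ : ∀ k, (Ψ k).PosSemidef) (z : ℕ → m → ℂ) (I : Set ℕ) :
    ∑' k : I, ENNReal.ofReal ((star (z k) ⬝ᵥ (Ψ k *ᵥ z k)).re) = 0 ↔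
      ∀ k ∈ I, Ψ k *ᵥ z k = 0 := by
  simp only [ENNReal.tsum_eq_zero, Subtype.forall, (hΨ _).ofReal_re_dotProduct_mulVec_eq_zero_iff]

/-- Lemma 3.2: definiteness on a discrete interval `I` holds iff, for a single
fixed `λ₀`, every solution of the system at `λ₀` whose `Ψ`-seminorm over `I`
vanishes is trivial on `I`. -/
theorem stmt13 (n : ℕ)
    (J : Matrix (Fin n ⊕ Fin n) (Fin n ⊕ Fin n) ℂ)
    (hJ : J = Matrix.fromBlocks 0 1 (-1) 0)
    (S Ψ : ℕ → Matrix (Fin n ⊕ Fin n) (Fin n ⊕ Fin n) ℂ)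
    (hS : ∀ k : ℕ, (S k)ᴴ * J * S k = J)
    (hΨpsd : ∀ k : ℕ, (Ψ k).PosSemidef)
    (hΨJ : ∀ k : ℕ, Ψ k * J * Ψ k = 0)
    (I : Set ℕ) (hI : I.OrdConnected) (hne : I.Nonempty)
    (l₀ : ℂ) :
    -- definiteness on I:
    (∀ (l : ℂ) (z : ℕ → (Fin n ⊕ Fin n) → ℂ),
        (∀ k : ℕ, z k = (S k - l • (J * Ψ k * S k)) *ᵥ z (k + 1)) → z ≠ 0 →
        0 < ∑' k : I, ENNReal.ofReal ((star (z (k : ℕ)) ⬝ᵥ (Ψ (k : ℕ) *ᵥ z (k : ℕ))).re)) ↔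
      -- characterization at the single value l₀:
      (∀ z : ℕ → (Fin n ⊕ Fin n) → ℂ,
        (∀ k : ℕ, z k = (S k - l₀ • (J * Ψ k * S k)) *ᵥ z (k + 1)) →
        (∑' k : I, ENNReal.ofReal ((star (z (k : ℕ)) ⬝ᵥ (Ψ (k : ℕ) *ᵥ z (k : ℕ))).re)) = 0 →
        ∀ k ∈ I, z k = 0) := by
  have hJunit : IsUnit J := by
    refine ⟨⟨J, -J, ?_, ?_⟩, rfl⟩ <;>
      simp [hJ, fromBlocks_zero_one_neg_one_zero_mul_self]
  have h𝕊 (l : ℂ) (k : ℕ) : IsUnit (S k - l • (J * Ψ k * S k)) :=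
    isUnit_sub_smul_mul_mul (isUnit_of_conjTranspose_mul_mul_self_eq hJunit (hS k)) (hΨJ k) l
  have hinj (l : ℂ) (k : ℕ) : Injective (S k - l • (J * Ψ k * S k)).mulVec :=
    mulVec_injective_of_isUnit (h𝕊 l k)
  simp only [tsum_ofReal_re_dotProduct_mulVec_eq_zero_iff hΨpsd, pos_iff_ne_zero, ne_eq]
  constructor
  · intro hdef z hz hzero k hk
    by_contra hzk
    exact hdef l₀ z hz (fun h => hzk (by simp [h])) hzero
  · intro hchar l z hz hzne hzero
    obtain ⟨k₀, hk₀⟩ := hne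
    obtain ⟨w, hw, hwk₀⟩ := exists_recurrence_solution_eq
      (fun k => ⟨hinj l₀ k, mulVec_surjective_iff_isUnit.2 (h𝕊 l₀ k)⟩) k₀ (z k₀)
    have hzw : EqOn z w I := eqOn_of_recurrence (hinj l₀) hI
      (fun k hk _ => by
        rw [hz k, sub_smul_mulVec_eq_of_mulVec_eq_zero (hΨJ k) (hz k ▸ hzero k hk) l₀])
      (fun k _ _ => hw k) hk₀ hwk₀.symm
    have hzk₀ : z k₀ = 0 := hzw hk₀ ▸ hchar w hw (fun k hk => hzw hk ▸ hzero k hk) k₀ hk₀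
    exact hzne (eq_of_recurrence (hinj l) hz (fun _ => (mulVec_zero _).symm) k₀ hzk₀)
end

section
/- Let Φ(λ) be the fundamental solution of the discrete symplectic system with Φ_{k₀}(λ) = I for all λ, and for a finite discrete interval I containing k₀ define φ(λ, I) := Σ_{k∈I} Φ_k(λ)* Ψ_k Φ_k(λ). Then the kernel and the range of φ(λ, I) are independent of λ ∈ ℂ. -/
/-!
If `Ψ_k Φ_k(λ) ξ = 0` for every `k ∈ I`, then `Φ_k(λ) ξ` does not depend on `λ` on `I`: since
`Ψ_k J Ψ_k = 0`, we have `Ψ_k (I - λ J Ψ_k) = Ψ_k`, and `I - λ J Ψ_k` fixes every vector killed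
by `Ψ_k`, so along such `ξ` the recursion collapses to the `λ`-free recursion
`Φ_k ξ = S_k Φ_{k+1} ξ`, which propagates from `Φ_{k₀} = I` to both sides of `k₀` (upwards using
that `S_k` is invertible for `k ≥ k₀`, as `Φ_k(0) = S_k Φ_{k+1}(0)`). By positive semidefiniteness,
the kernel of `φ(λ, I)` consists exactly of such `ξ`, so it is independent of `λ`; the range of the
Hermitian matrix `φ(λ, I)` is the orthogonal complement of its kernel.
-/

open Matrix
open scoped ComplexOrder

namespace Matrix

section Transfer
variable {R ι : Type*} [CommRing R] [Fintype ι] [DecidableEq ι] {J Ψ : Matrix ι ι R}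

theorem mulVec_one_sub_smul_mul_mulVec (hΨJ : Ψ * J * Ψ = 0) (l : R) (x : ι → R) :
    Ψ *ᵥ ((1 - l • (J * Ψ)) *ᵥ x) = Ψ *ᵥ x := by
  rw [mulVec_mulVec, mul_sub, mul_one, mul_smul_comm, ← mul_assoc, hΨJ, smul_zero, sub_zero]

theorem one_sub_smul_mul_mulVec_of_mulVec_eq_zero (l : R) {x : ι → R} (hx : Ψ *ᵥ x = 0) :
    (1 - l • (J * Ψ)) *ᵥ x = x := by
  rw [sub_mulVec, one_mulVec, smul_mulVec, ← mulVec_mulVec, hx, mulVec_zero, smul_zero,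
    sub_zero]

end Transfer

section Kernel
variable {𝕜 ι κ : Type*} [RCLike 𝕜] [Fintype ι]

theorem sum_conjTranspose_mul_mul_mulVec_eq_zero_iff {s : Finset κ} {P : κ → Matrix ι ι 𝕜}
    (hP : ∀ k ∈ s, (P k).PosSemidef) (F : κ → Matrix ι ι 𝕜) (ξ : ι → 𝕜) :
    (∑ k ∈ s, (F k)ᴴ * P k * F k) *ᵥ ξ = 0 ↔ ∀ k ∈ s, P k *ᵥ (F k *ᵥ ξ) = 0 := by
  have hterm : ∀ k ∈ s, ((F k)ᴴ * P k * F k).PosSemidef := fun k hk =>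
    (hP k hk).conjTranspose_mul_mul_same (F k)
  have hform : ∀ k, star ξ ⬝ᵥ ((F k)ᴴ * P k * F k) *ᵥ ξ =
      star (F k *ᵥ ξ) ⬝ᵥ P k *ᵥ (F k *ᵥ ξ) := by
    intro k
    rw [mul_assoc, ← mulVec_mulVec, dotProduct_mulVec, ← star_mulVec, ← mulVec_mulVec]
  rw [← (posSemidef_sum s hterm).dotProduct_mulVec_zero_iff, sum_mulVec, dotProduct_sum,
    Finset.sum_eq_zero_iff_of_nonneg fun k hk => (hterm k hk).dotProduct_mulVec_nonneg ξ]
  exact forall₂_congr fun k hk => by rw [hform, (hP k hk).dotProduct_mulVec_zero_iff]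

end Kernel

section Range
variable {𝕜 ι : Type*} [RCLike 𝕜] [Fintype ι] [DecidableEq ι]

theorem IsHermitian.range_toEuclideanLin {A : Matrix ι ι 𝕜} (hA : A.IsHermitian) :
    LinearMap.range A.toEuclideanLin = (LinearMap.ker A.toEuclideanLin)ᗮ := by
  rw [← (isSymmetric_toEuclideanLin_iff.mpr hA).orthogonal_range,
    Submodule.orthogonal_orthogonal]

theorem exists_mulVec_eq_iff_mem_range_toEuclideanLin (A : Matrix ι ι 𝕜) (v : ι → 𝕜) :
    (∃ ξ, A *ᵥ ξ = v) ↔ WithLp.toLp 2 v ∈ LinearMap.range A.toEuclideanLin := by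
  rw [LinearMap.mem_range]
  exact ⟨fun ⟨ξ, h⟩ => ⟨WithLp.toLp 2 ξ, congrArg (WithLp.toLp 2) h⟩,
    fun ⟨y, h⟩ => ⟨y.ofLp, WithLp.toLp_injective 2 h⟩⟩

theorem IsHermitian.exists_mulVec_eq_iff_of_mulVec_eq_zero_iff {A B : Matrix ι ι 𝕜}
    (hA : A.IsHermitian) (hB : B.IsHermitian) (hker : ∀ ξ, A *ᵥ ξ = 0 ↔ B *ᵥ ξ = 0)
    (v : ι → 𝕜) : (∃ ξ, A *ᵥ ξ = v) ↔ ∃ ξ, B *ᵥ ξ = v := by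
  have hkerE : LinearMap.ker A.toEuclideanLin = LinearMap.ker B.toEuclideanLin := by
    ext x
    simpa [toLpLin_apply] using hker x.ofLp
  rw [exists_mulVec_eq_iff_mem_range_toEuclideanLin,
    exists_mulVec_eq_iff_mem_range_toEuclideanLin, hA.range_toEuclideanLin,
    hB.range_toEuclideanLin, hkerE]

end Range

end Matrix

theorem isUnit_of_le_of_eq_mul_succ {M : Type*} [Monoid M] [IsDedekindFiniteMonoid M]
    {A S : ℕ → M} (hA : ∀ k, A k = S k * A (k + 1)) {k₀ : ℕ} (hA₀ : A k₀ = 1) {k : ℕ}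
    (hk : k₀ ≤ k) : IsUnit (S k) := by
  suffices h : ∀ j, k₀ ≤ j → IsUnit (A j) from isUnit_of_mul_isUnit_left (hA k ▸ h k hk)
  intro j hj
  induction j, hj using Nat.le_induction with
  | base => exact hA₀ ▸ isUnit_one
  | succ j _ ih => exact isUnit_of_mul_isUnit_right (hA j ▸ ih)

section Propagation
variable {R ι : Type*} [CommRing R] [Fintype ι] [DecidableEq ι] {J : Matrix ι ι R}
  {S Ψ : ℕ → Matrix ι ι R} {Φ : R → ℕ → Matrix ι ι R}

theorem mulVec_eq_one_sub_smul_mul_mulVec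
    (hΦ : ∀ l k, Φ l k = ((1 - l • (J * Ψ k)) * S k) * Φ l (k + 1))
    (l : R) (k : ℕ) (ξ : ι → R) :
    Φ l k *ᵥ ξ = (1 - l • (J * Ψ k)) *ᵥ (S k *ᵥ (Φ l (k + 1) *ᵥ ξ)) := by
  rw [mulVec_mulVec, mulVec_mulVec, ← hΦ]

theorem mulVec_mulVec_eq_mulVec_mulVec_succ
    (hΦ : ∀ l k, Φ l k = ((1 - l • (J * Ψ k)) * S k) * Φ l (k + 1))
    (hΨJ : ∀ k, Ψ k * J * Ψ k = 0) (l : R) (k : ℕ) (ξ : ι → R) :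
    Ψ k *ᵥ (Φ l k *ᵥ ξ) = Ψ k *ᵥ (S k *ᵥ (Φ l (k + 1) *ᵥ ξ)) := by
  rw [mulVec_eq_one_sub_smul_mul_mulVec hΦ, mulVec_one_sub_smul_mul_mulVec (hΨJ k)]

theorem mulVec_eq_mulVec_succ_of_mulVec_eq_zero
    (hΦ : ∀ l k, Φ l k = ((1 - l • (J * Ψ k)) * S k) * Φ l (k + 1))
    (hΨJ : ∀ k, Ψ k * J * Ψ k = 0) {l : R} {k : ℕ} {ξ : ι → R}
    (h : Ψ k *ᵥ (Φ l k *ᵥ ξ) = 0) :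
    Φ l k *ᵥ ξ = S k *ᵥ (Φ l (k + 1) *ᵥ ξ) := by
  rw [mulVec_mulVec_eq_mulVec_mulVec_succ hΦ hΨJ] at h
  rw [mulVec_eq_one_sub_smul_mul_mulVec hΦ, one_sub_smul_mul_mulVec_of_mulVec_eq_zero l h]

theorem mulVec_eq_of_forall_mem_Icc_mulVec_eq_zero
    (hΦ : ∀ l k, Φ l k = ((1 - l • (J * Ψ k)) * S k) * Φ l (k + 1))
    (hΨJ : ∀ k, Ψ k * J * Ψ k = 0) {k₀ : ℕ} (hΦ₀ : ∀ l, Φ l k₀ = 1) {a b : ℕ}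
    (hk₀ : k₀ ∈ Finset.Icc a b) {l : R} {ξ : ι → R}
    (hξ : ∀ k ∈ Finset.Icc a b, Ψ k *ᵥ (Φ l k *ᵥ ξ) = 0) (μ : R) :
    ∀ k ∈ Finset.Icc a b, Φ μ k *ᵥ ξ = Φ l k *ᵥ ξ := by
  rw [Finset.mem_Icc] at hk₀
  simp only [Finset.mem_Icc] at hξ ⊢
  have up : ∀ k, k₀ ≤ k → k ≤ b → Φ μ k *ᵥ ξ = Φ l k *ᵥ ξ := by
    intro k hk
    induction k, hk using Nat.le_induction with
    | base => simp [hΦ₀]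
    | succ k hk ih =>
      intro hkb
      have hl := hξ k ⟨by omega, by omega⟩
      have hμ : Ψ k *ᵥ (Φ μ k *ᵥ ξ) = 0 := by rw [ih (by omega)]; exact hl
      apply mulVec_injective_of_isUnit
        (isUnit_of_le_of_eq_mul_succ (fun j => by simpa using hΦ 0 j) (hΦ₀ 0) hk)
      rw [← mulVec_eq_mulVec_succ_of_mulVec_eq_zero hΦ hΨJ hl,
        ← mulVec_eq_mulVec_succ_of_mulVec_eq_zero hΦ hΨJ hμ, ih (by omega)]
  have down : ∀ k, k ≤ k₀ → a ≤ k → Φ μ k *ᵥ ξ = Φ l k *ᵥ ξ := by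
    intro k hk
    induction hk using Nat.decreasingInduction with
    | self => simp [hΦ₀]
    | of_succ k hk ih =>
      intro hak
      have hl := hξ k ⟨hak, by omega⟩
      have hμ : Ψ k *ᵥ (Φ μ k *ᵥ ξ) = 0 := by
        rw [mulVec_mulVec_eq_mulVec_mulVec_succ hΦ hΨJ, ih (by omega),
          ← mulVec_mulVec_eq_mulVec_mulVec_succ hΦ hΨJ, hl]
      rw [mulVec_eq_mulVec_succ_of_mulVec_eq_zero hΦ hΨJ hl,
        mulVec_eq_mulVec_succ_of_mulVec_eq_zero hΦ hΨJ hμ, ih (by omega)]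
  intro k hk
  rcases le_total k₀ k with h | h
  · exact up k h hk.2
  · exact down k h hk.1

end Propagation

theorem stmt16_general (n : ℕ)
    (J : Matrix (Fin n ⊕ Fin n) (Fin n ⊕ Fin n) ℂ)
    (S Ψ : ℕ → Matrix (Fin n ⊕ Fin n) (Fin n ⊕ Fin n) ℂ)
    (hΨpsd : ∀ k : ℕ, (Ψ k).PosSemidef)
    (hΨJ : ∀ k : ℕ, Ψ k * J * Ψ k = 0)
    (Φ : ℂ → ℕ → Matrix (Fin n ⊕ Fin n) (Fin n ⊕ Fin n) ℂ)
    (k₀ : ℕ)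
    (hΦ : ∀ (l : ℂ) (k : ℕ),
      Φ l k = ((1 - l • (J * Ψ k)) * S k) * Φ l (k + 1))
    (hΦ₀ : ∀ l : ℂ, Φ l k₀ = 1)
    (I : Finset ℕ) (hI : ∃ a b : ℕ, I = Finset.Icc a b) (hk₀ : k₀ ∈ I) :
    ∀ l μ : ℂ,
      (∀ ξ : (Fin n ⊕ Fin n) → ℂ,
        (∑ k ∈ I, (Φ l k)ᴴ * Ψ k * Φ l k) *ᵥ ξ = 0 ↔
          (∑ k ∈ I, (Φ μ k)ᴴ * Ψ k * Φ μ k) *ᵥ ξ = 0) ∧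
      (∀ v : (Fin n ⊕ Fin n) → ℂ,
        (∃ ξ, (∑ k ∈ I, (Φ l k)ᴴ * Ψ k * Φ l k) *ᵥ ξ = v) ↔
          (∃ ξ, (∑ k ∈ I, (Φ μ k)ᴴ * Ψ k * Φ μ k) *ᵥ ξ = v)) := by
  obtain ⟨a, b, rfl⟩ := hI
  have hΨpsd' : ∀ k ∈ Finset.Icc a b, (Ψ k).PosSemidef := fun k _ => hΨpsd k
  have hker_imp : ∀ l μ ξ, (∑ k ∈ Finset.Icc a b, (Φ l k)ᴴ * Ψ k * Φ l k) *ᵥ ξ = 0 →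
      (∑ k ∈ Finset.Icc a b, (Φ μ k)ᴴ * Ψ k * Φ μ k) *ᵥ ξ = 0 := by
    intro l μ ξ h
    rw [sum_conjTranspose_mul_mul_mulVec_eq_zero_iff hΨpsd'] at h ⊢
    intro k hk
    rw [mulVec_eq_of_forall_mem_Icc_mulVec_eq_zero hΦ hΨJ hΦ₀ hk₀ h μ k hk]
    exact h k hk
  have hherm : ∀ l, (∑ k ∈ Finset.Icc a b, (Φ l k)ᴴ * Ψ k * Φ l k).IsHermitian := fun l =>
    (posSemidef_sum _ fun k hk =>
      (hΨpsd' k hk).conjTranspose_mul_mul_same (Φ l k)).isHermitian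
  intro l μ
  have hker := fun ξ => Iff.intro (hker_imp l μ ξ) (hker_imp μ l ξ)
  exact ⟨hker, (hherm l).exists_mulVec_eq_iff_of_mulVec_eq_zero_iff (hherm μ) hker⟩

/-- Lemma 3.4: the kernel and the range of `φ(λ, I)` are independent of `λ`. -/
theorem stmt16 (n : ℕ)
    (J : Matrix (Fin n ⊕ Fin n) (Fin n ⊕ Fin n) ℂ)
    (hJ : J = Matrix.fromBlocks 0 1 (-1) 0)
    (S Ψ : ℕ → Matrix (Fin n ⊕ Fin n) (Fin n ⊕ Fin n) ℂ)
    (hS : ∀ k : ℕ, (S k)ᴴ * J * S k = J)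
    (hΨpsd : ∀ k : ℕ, (Ψ k).PosSemidef)
    (hΨJ : ∀ k : ℕ, Ψ k * J * Ψ k = 0)
    (Φ : ℂ → ℕ → Matrix (Fin n ⊕ Fin n) (Fin n ⊕ Fin n) ℂ)
    (k₀ : ℕ)
    (hΦ : ∀ (l : ℂ) (k : ℕ),
      Φ l k = ((1 - l • (J * Ψ k)) * S k) * Φ l (k + 1))
    (hΦ₀ : ∀ l : ℂ, Φ l k₀ = 1)
    (I : Finset ℕ) (hI : ∃ a b : ℕ, I = Finset.Icc a b) (hk₀ : k₀ ∈ I) :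
    ∀ l μ : ℂ,
      (∀ ξ : (Fin n ⊕ Fin n) → ℂ,
        (∑ k ∈ I, (Φ l k)ᴴ * Ψ k * Φ l k) *ᵥ ξ = 0 ↔
          (∑ k ∈ I, (Φ μ k)ᴴ * Ψ k * Φ μ k) *ᵥ ξ = 0) ∧
      (∀ v : (Fin n ⊕ Fin n) → ℂ,
        (∃ ξ, (∑ k ∈ I, (Φ l k)ᴴ * Ψ k * Φ l k) *ᵥ ξ = v) ↔
          (∃ ξ, (∑ k ∈ I, (Φ μ k)ᴴ * Ψ k * Φ μ k) *ᵥ ξ = v)) :=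
  stmt16_general n J S Ψ hΨpsd hΨJ Φ k₀ hΦ hΦ₀ I hI hk₀
end

section
/- Let λ ∈ ℂ and suppose 𝕊_k(λ) has block form [[A_k, B_k],[C_k + λW_k A_k, D_k + λW_k B_k]] with n×n blocks satisfying 𝕊_k(λ̄)* J 𝕊_k(λ) = J for all λ ∈ ℂ and k ∈ ℕ₀ (so that Ψ_k = diag{W_k, 0}). If there exists an index l ≥ 1 such that B_{l-1}, W_{l-1}, and W_l are invertible, then the system z_k = 𝕊_k(λ) z_{k+1} is definite on ℕ₀; i.e., any solution z (for any fixed λ) with Ψ_k z_k = 0 for all k ∈ ℕ₀ vanishes identically. -/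
/-!
Evaluating the symplectic identity `𝕊_k(λ̄)* J 𝕊_k(λ) = J` in determinants shows that every
`𝕊_k(λ)` is invertible, so a solution vanishing at one index vanishes everywhere. With
`W_{l-1}` and `W_l` invertible, `Ψ z = 0` forces `x_{l-1} = x_l = 0`; the first block row of
`z_{l-1} = 𝕊_{l-1}(λ) z_l` then reads `B_{l-1} u_l = 0`, so `u_l = 0` and `z_l = 0`.
-/

open Matrix

section

variable {R l m o : Type*} [CommRing R] [Fintype l] [DecidableEq l]

namespace Matrix

theorem isUnit_det_fromBlocks_zero_one_neg_one_zero :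
    IsUnit (fromBlocks 0 1 (-1) 0 : Matrix (l ⊕ l) (l ⊕ l) R).det := by
  have hJ : (fromBlocks 0 1 (-1) 0 : Matrix (l ⊕ l) (l ⊕ l) R) = -J l R := by
    simp [J, fromBlocks_neg]
  rw [hJ, det_neg]
  exact (isUnit_neg_one.pow _).mul (isUnit_det_J l R)

theorem isUnit_det_of_mul_mul_eq {T J S : Matrix l l R} (hJ : IsUnit J.det)
    (h : T * J * S = J) : IsUnit S.det := by
  rw [← h, det_mul] at hJ
  exact isUnit_of_mul_isUnit_right hJ

theorem eq_zero_of_mulVec_eq_zero_of_isUnit_det {S : Matrix l l R} (hS : IsUnit S.det)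
    {v : l → R} (hv : S *ᵥ v = 0) : v = 0 := by
  rw [← one_mulVec v, ← nonsing_inv_mul S hS, ← mulVec_mulVec, hv, mulVec_zero]

theorem comp_inl_eq_zero_of_fromBlocks_mulVec_eq_zero [Fintype m] {W : Matrix l l R}
    (hW : IsUnit W.det) {v : l ⊕ m → R}
    (hv : fromBlocks W 0 0 (0 : Matrix m m R) *ᵥ v = 0) :
    v ∘ Sum.inl = 0 := by
  refine eq_zero_of_mulVec_eq_zero_of_isUnit_det hW ?_
  simpa [fromBlocks_mulVec] using congrArg (· ∘ Sum.inl) hv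

theorem comp_inr_eq_zero_of_fromBlocks_mulVec [Fintype o] {A : Matrix l o R}
    {B : Matrix l l R} {C : Matrix m o R} {D : Matrix m l R} (hB : IsUnit B.det)
    {v : o ⊕ l → R} {w : l ⊕ m → R}
    (h : fromBlocks A B C D *ᵥ v = w) (hv : v ∘ Sum.inl = 0) (hw : w ∘ Sum.inl = 0) :
    v ∘ Sum.inr = 0 := by
  refine eq_zero_of_mulVec_eq_zero_of_isUnit_det hB ?_
  simpa [fromBlocks_mulVec, hv, hw] using congrArg (· ∘ Sum.inl) h

end Matrix

theorem Sum.eq_zero_of_comp_inl_of_comp_inr {α β M : Type*} [Zero M] {v : α ⊕ β → M}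
    (hl : v ∘ Sum.inl = 0) (hr : v ∘ Sum.inr = 0) : v = 0 :=
  funext fun i => i.rec (congrFun hl) (congrFun hr)

theorem eq_zero_of_eq_mulVec_succ {S : ℕ → Matrix l l R} {z : ℕ → l → R}
    (hS : ∀ k, IsUnit (S k).det) (hz : ∀ k, z k = S k *ᵥ z (k + 1)) {j : ℕ} (hj : z j = 0)
    (k : ℕ) : z k = 0 := by
  rcases le_total k j with hkj | hjk
  · induction hkj using Nat.decreasingInduction with
    | self => exact hj
    | of_succ k _ ih => rw [hz k, ih, mulVec_zero]
  · induction k, hjk using Nat.le_induction with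
    | base => exact hj
    | succ k _ ih => exact eq_zero_of_mulVec_eq_zero_of_isUnit_det (hS k) ((hz k).symm.trans ih)

end

/-- Theorem 3.7: a sufficient condition for definiteness on `ℕ₀` for systems
with the special linear dependence on the spectral parameter. -/
theorem stmt19 (n : ℕ)
    (J : Matrix (Fin n ⊕ Fin n) (Fin n ⊕ Fin n) ℂ)
    (hJ : J = Matrix.fromBlocks 0 1 (-1) 0)
    (A B C D W : ℕ → Matrix (Fin n) (Fin n) ℂ)
    (hsymp : ∀ (k : ℕ) (l : ℂ),
      (Matrix.fromBlocks (A k) (B k)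
          (C k + (starRingEnd ℂ l) • (W k * A k))
          (D k + (starRingEnd ℂ l) • (W k * B k)))ᴴ * J *
        (Matrix.fromBlocks (A k) (B k)
          (C k + l • (W k * A k)) (D k + l • (W k * B k))) = J)
    (l' : ℕ) (hl' : 1 ≤ l')
    (hB : IsUnit (B (l' - 1)).det)
    (hW1 : IsUnit (W (l' - 1)).det)
    (hW2 : IsUnit (W l').det) :
    ∀ (lam : ℂ) (z : ℕ → (Fin n ⊕ Fin n) → ℂ),
      (∀ k : ℕ, z k =
        (Matrix.fromBlocks (A k) (B k)
          (C k + lam • (W k * A k)) (D k + lam • (W k * B k))) *ᵥ z (k + 1)) →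
      (∀ k : ℕ, (Matrix.fromBlocks (W k) (0 : Matrix (Fin n) (Fin n) ℂ) (0 : Matrix (Fin n) (Fin n) ℂ) (0 : Matrix (Fin n) (Fin n) ℂ)) *ᵥ z k = 0) →
      ∀ k : ℕ, z k = 0 := by
  intro lam z hrec hpsi
  have hJunit : IsUnit J.det := hJ ▸ isUnit_det_fromBlocks_zero_one_neg_one_zero
  refine eq_zero_of_eq_mulVec_succ (fun k => isUnit_det_of_mul_mul_eq hJunit (hsymp k lam))
    hrec (j := l') ?_
  have hx₀ := comp_inl_eq_zero_of_fromBlocks_mulVec_eq_zero hW1 (hpsi (l' - 1))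
  have hx₁ := comp_inl_eq_zero_of_fromBlocks_mulVec_eq_zero hW2 (hpsi l')
  have hstep := hrec (l' - 1)
  rw [Nat.sub_add_cancel hl'] at hstep
  exact Sum.eq_zero_of_comp_inl_of_comp_inr hx₁
    (comp_inr_eq_zero_of_fromBlocks_mulVec hB hstep.symm hx₁ hx₀)
end
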